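/- arXiv:2001.09606 — 4 statements merged into one kernel-verified Lean document; each statement's English description precedes it below -/
import Mathlib

section
/- Let s ∈ ℂ with Re(s) > 0 and let θ ∈ (π/2, 3π/2). Then the integral along the ray from 0 to ∞·e^{iθ} of e^t t^{s−1} dt, i.e. ∫₀^∞ exp(r e^{iθ}) r^{s−1} e^{isθ} dr, converges, is independent of θ ∈ (π/2, 3π/2), and equals ∫₀^∞ exp(−r) r^{s−1} e^{iπ s} dr = e^{iπ s} Γ(s). -/
open Set MeasureTheory

namespace RayIntegralAux

open Filter Metric Complex

open Complex

lemma meas_aux (a b : ℂ) :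
    AEStronglyMeasurable (fun t : ℝ => (t : ℂ) ^ (a - 1) * Complex.exp (-(b * t)))
      (volume.restrict (Ioi 0)) := by
  refine ContinuousOn.aestronglyMeasurable (ContinuousOn.mul ?_ ?_) measurableSet_Ioi
  · apply continuousOn_of_forall_continuousAt
    intro x hx
    exact (continuousAt_cpow_const <| Complex.ofReal_mem_slitPlane.2 hx).comp
      Complex.continuous_ofReal.continuousAt
  · exact (Complex.continuous_exp.comp (by continuity)).continuousOn

lemma norm_aux {t : ℝ} (ht : 0 < t) (a b : ℂ) :
    ‖(t : ℂ) ^ (a - 1) * Complex.exp (-(b * t))‖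
      = t ^ (a.re - 1) * Real.exp (-(b.re * t)) := by
  rw [norm_mul,
    Complex.norm_cpow_eq_rpow_re_of_pos ht, Complex.norm_exp]
  simp [Complex.sub_re]

lemma integrable_real {σ c : ℝ} (hσ : -1 < σ) (hc : 0 < c) :
    IntegrableOn (fun t : ℝ => t ^ σ * Real.exp (-(c * t))) (Ioi 0) := by
  have := integrableOn_rpow_mul_exp_neg_mul_rpow (p := 1) (s := σ) (b := c) hσ zero_lt_one hc
  simpa [Real.rpow_one, neg_mul] using this

lemma integrableA {a b : ℂ} (ha : 0 < a.re) (hb : 0 < b.re) :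
    IntegrableOn (fun t : ℝ => (t : ℂ) ^ (a - 1) * Complex.exp (-(b * t))) (Ioi 0) := by
  refine ⟨meas_aux a b, ?_⟩
  rw [← hasFiniteIntegral_norm_iff]
  refine ((integrable_real (σ := a.re - 1) (c := b.re) (by linarith) hb).2).congr ?_
  apply ((ae_restrict_iff' measurableSet_Ioi).mpr)
  filter_upwards with t ht
  rw [norm_aux ht a b]

lemma hasDerivAtA {a : ℂ} (ha : 0 < a.re) {b : ℂ} (hb : 0 < b.re) :
    HasDerivAt (fun z : ℂ => ∫ t : ℝ in Ioi 0, (t : ℂ) ^ (a - 1) * Complex.exp (-(z * t)))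
      (∫ t : ℝ in Ioi 0, (t : ℂ) ^ (a - 1) * Complex.exp (-(b * t)) * (-(t : ℂ))) b := by
  set μ := volume.restrict (Ioi (0:ℝ))
  set F : ℂ → ℝ → ℂ := fun z t => (t : ℂ) ^ (a - 1) * Complex.exp (-(z * t))
  set F' : ℂ → ℝ → ℂ := fun z t => (t : ℂ) ^ (a - 1) * Complex.exp (-(z * t)) * (-(t : ℂ))
  set bound : ℝ → ℝ := fun t => t ^ a.re * Real.exp (-(b.re / 2 * t))
  have hε : (0:ℝ) < b.re / 2 := by linarith
  have key := hasDerivAt_integral_of_dominated_loc_of_deriv_le (μ := μ) (F := F) (F' := F')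
    (bound := bound) (Metric.ball_mem_nhds b hε)
    (Eventually.of_forall fun z => meas_aux a z)
    (integrableA ha hb)
    ((meas_aux a b).mul (Complex.continuous_ofReal.neg.aestronglyMeasurable.restrict))
    ?_ ?_ ?_
  · exact key.2
  · -- bound
    apply (ae_restrict_iff' measurableSet_Ioi).mpr
    filter_upwards with t ht
    intro z hz
    rw [mem_Ioi] at ht
    have hzre : b.re / 2 ≤ z.re := by
      have h1 : |(z - b).re| ≤ ‖z - b‖ := Complex.abs_re_le_norm _
      rw [mem_ball, Complex.dist_eq] at hz
      have := abs_le.mp (le_of_lt (lt_of_le_of_lt h1 hz))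
      simp only [Complex.sub_re] at this
      linarith [this.1]
    have hn : ‖F' z t‖ = t ^ (a.re - 1) * Real.exp (-(z.re * t)) * t := by
      rw [norm_mul, norm_aux ht a z]
      simp [abs_of_pos ht]
    rw [hn]
    have h2 : t ^ (a.re - 1) * Real.exp (-(z.re * t)) * t
        = t ^ a.re * Real.exp (-(z.re * t)) := by
      have h3 : t ^ (a.re - 1) * t = t ^ a.re := by
        rw [← Real.rpow_add_one ht.ne' (a.re - 1), sub_add_cancel]
      rw [mul_right_comm, h3]
    rw [h2]
    apply mul_le_mul_of_nonneg_left _ (Real.rpow_nonneg ht.le _)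
    apply Real.exp_le_exp.mpr
    nlinarith
  · -- bound integrable
    exact integrable_real (by linarith) hε
  · -- differentiability
    apply (ae_restrict_iff' measurableSet_Ioi).mpr
    filter_upwards with t ht
    intro z hz
    have h0 : HasDerivAt (fun z : ℂ => -(z * t)) (-(t:ℂ)) z := by
      simpa using ((hasDerivAt_id z).mul_const (t:ℂ)).const_mul (-1)
    have h1 := (h0.cexp).const_mul ((t:ℂ) ^ (a - 1))
    simpa [F, F', mul_assoc] using h1

lemma integralA {a : ℂ} (ha : 0 < a.re) {b : ℂ} (hb : 0 < b.re) :
    ∫ t : ℝ in Ioi 0, (t : ℂ) ^ (a - 1) * Complex.exp (-(b * t))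
      = (1 / b) ^ a * Complex.Gamma a := by
  set U : Set ℂ := {z | 0 < z.re}
  have hUo : IsOpen U := isOpen_lt continuous_const Complex.continuous_re
  have hUp : IsPreconnected U := (convex_halfSpace_re_gt 0).isPreconnected
  set f : ℂ → ℂ := fun z => ∫ t : ℝ in Ioi 0, (t : ℂ) ^ (a - 1) * Complex.exp (-(z * t))
  set g : ℂ → ℂ := fun z => (1 / z) ^ a * Complex.Gamma a
  have hf : AnalyticOnNhd ℂ f U := by
    apply DifferentiableOn.analyticOnNhd _ hUo
    intro z hz
    exact (hasDerivAtA ha hz).differentiableAt.differentiableWithinAt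
  have hg : AnalyticOnNhd ℂ g U := by
    apply DifferentiableOn.analyticOnNhd _ hUo
    intro z hz
    have hzre : 0 < z.re := hz
    have hz0 : z ≠ 0 := fun h => by rw [h] at hzre; simp at hzre
    have hslit : (1 / z : ℂ) ∈ Complex.slitPlane := by
      rw [Complex.mem_slitPlane_iff]
      left
      rw [one_div, Complex.inv_re]
      exact div_pos hzre (Complex.normSq_pos.mpr hz0)
    have hd : DifferentiableAt ℂ (fun z : ℂ => (1 / z)) z :=
      (differentiableAt_const 1).div differentiableAt_id hz0
    exact ((hd.cpow (differentiableAt_const a) hslit).mul_const _).differentiableWithinAt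
  have h1U : (1:ℂ) ∈ U := by simp [U]
  have hfreq : ∃ᶠ z in nhdsWithin (1:ℂ) {(1:ℂ)}ᶜ, f z = g z := by
    rw [Filter.frequently_iff]
    intro V hV
    obtain ⟨ε, hε, hball⟩ := Metric.mem_nhdsWithin_iff.mp hV
    refine ⟨((1 + ε/2 : ℝ) : ℂ), hball ⟨?_, ?_⟩, ?_⟩
    · rw [mem_ball, Complex.dist_eq]
      have : ((1 + ε/2 : ℝ) : ℂ) - 1 = ((ε/2 : ℝ) : ℂ) := by push_cast; ring
      rw [this, Complex.norm_real, Real.norm_eq_abs, abs_of_pos (by linarith)]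
      linarith
    · simp only [mem_compl_iff, mem_singleton_iff]
      intro h
      have : (1 + ε/2 : ℝ) = 1 := by exact_mod_cast h
      linarith
    · have hr : (0:ℝ) < 1 + ε/2 := by linarith
      have := Complex.integral_cpow_mul_exp_neg_mul_Ioi ha hr
      simpa [f, g, Complex.ofReal_mul] using this
  have := hf.eqOn_of_preconnected_of_frequently_eq hg hUp h1U hfreq
  exact this hb


end RayIntegralAux

open RayIntegralAux in
/-- Ray integral of `e^t t^(s-1)` at angle `θ ∈ (π/2, 3π/2)`: it converges and equals
`e^(iπs) Γ(s)`. -/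
theorem ray_integral_upper (s : ℂ) (hs : 0 < s.re) (θ : ℝ)
    (hθ : θ ∈ Set.Ioo (Real.pi / 2) (3 * Real.pi / 2)) :
    MeasureTheory.IntegrableOn
      (fun r : ℝ => Complex.exp (r * Complex.exp (θ * Complex.I)) * (r : ℂ) ^ (s - 1) *
        Complex.exp (Complex.I * s * θ)) (Set.Ioi 0) ∧
    (∫ r : ℝ in Set.Ioi 0,
        Complex.exp (r * Complex.exp (θ * Complex.I)) * (r : ℂ) ^ (s - 1) *
          Complex.exp (Complex.I * s * θ))
      = Complex.exp (Complex.I * Real.pi * s) * Complex.Gamma s := by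
  have pi_pos := Real.pi_pos
  set b : ℂ := -Complex.exp (θ * Complex.I) with hbdef
  have hb : 0 < b.re := by
    rw [hbdef, Complex.neg_re, Complex.exp_ofReal_mul_I_re, neg_pos]
    exact Real.cos_neg_of_pi_div_two_lt_of_lt hθ.1 (by linarith [hθ.2])
  have hfun : ∀ r : ℝ, Complex.exp (r * Complex.exp (θ * Complex.I)) * (r : ℂ) ^ (s - 1) *
      Complex.exp (Complex.I * s * θ)
      = ((r : ℂ) ^ (s - 1) * Complex.exp (-(b * r))) * Complex.exp (Complex.I * s * θ) := by
    intro r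
    have harg : -(b * r) = r * Complex.exp (θ * Complex.I) := by rw [hbdef]; ring
    rw [harg]; ring
  constructor
  · exact MeasureTheory.IntegrableOn.congr_fun
      ((integrableA hs hb).mul_const (Complex.exp (Complex.I * s * θ)))
      (fun r _ => (hfun r).symm) measurableSet_Ioi
  · calc (∫ r : ℝ in Set.Ioi 0,
        Complex.exp (r * Complex.exp (θ * Complex.I)) * (r : ℂ) ^ (s - 1) *
          Complex.exp (Complex.I * s * θ))
        = ∫ r : ℝ in Set.Ioi 0,
            ((r : ℂ) ^ (s - 1) * Complex.exp (-(b * r))) * Complex.exp (Complex.I * s * θ) := by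
          exact setIntegral_congr_fun measurableSet_Ioi fun r _ => hfun r
      _ = (∫ r : ℝ in Set.Ioi 0, (r : ℂ) ^ (s - 1) * Complex.exp (-(b * r)))
            * Complex.exp (Complex.I * s * θ) := by
          rw [MeasureTheory.integral_mul_const]
      _ = ((1 / b) ^ s * Complex.Gamma s) * Complex.exp (Complex.I * s * θ) := by
          rw [integralA hs hb]
      _ = Complex.exp (Complex.I * Real.pi * s) * Complex.Gamma s := by
          have haux : Complex.exp (((Real.pi - θ : ℝ) : ℂ) * Complex.I)
              = -Complex.exp (-(↑θ * Complex.I)) := by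
            rw [Complex.ofReal_sub, sub_mul, Complex.exp_sub, Complex.exp_pi_mul_I,
              Complex.exp_neg]
            ring
          have h1b : (1 / b : ℂ) = Complex.exp (((Real.pi - θ : ℝ) : ℂ) * Complex.I) := by
            rw [hbdef, one_div, haux, Complex.exp_neg, neg_inv]
          have him : ((((Real.pi - θ : ℝ) : ℂ)) * Complex.I).im = Real.pi - θ := by
            simp [Complex.mul_I_im]
          have him1 : -Real.pi < ((((Real.pi - θ : ℝ) : ℂ)) * Complex.I).im := by
            rw [him]; linarith [hθ.2]
          have him2 : ((((Real.pi - θ : ℝ) : ℂ)) * Complex.I).im ≤ Real.pi := by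
            rw [him]; linarith [hθ.1]
          have hpow : (1 / b : ℂ) ^ s
              = Complex.exp ((((Real.pi - θ : ℝ) : ℂ) * Complex.I) * s) := by
            rw [h1b, Complex.cpow_def_of_ne_zero (Complex.exp_ne_zero _),
              Complex.log_exp him1 him2]
          rw [hpow, mul_right_comm, ← Complex.exp_add]
          congr 2
          push_cast
          ring
end

section
/- Let s ∈ ℂ with Re(s) > 0 and let θ ∈ (−3π/2, −π/2). Then ∫₀^∞ exp(r e^{iθ}) r^{s−1} e^{isθ} dr = e^{−iπ s} Γ(s); in particular this ray integral is independent of θ in the stated range. -/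
/-!
For `θ` in the given range, `b := e^{i(θ + π)} = -e^{iθ}` has `Re b = cos (θ + π) > 0`, so the
integral is the Laplace transform `∫₀^∞ r^{s-1} e^{-br} dr`. For real `b > 0` this equals
`(1/b)^s Γ(s)` by scaling; both sides are holomorphic in `b` on the right half-plane, so the
identity theorem extends the formula to all `Re b > 0`. Finally `(1/b)^s = e^{-i(θ+π)s}` (the
argument of `b` is `θ + π ∈ (-π/2, π/2)`, so no branch issue), and the factor `e^{isθ}` turns
this into `e^{-iπs}`.
-/

open Set MeasureTheory Filter Topology Complex
open scoped Real

lemma Real.integrableOn_rpow_mul_exp_neg_mul {a c : ℝ} (ha : 0 < a) (hc : 0 < c) :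
    IntegrableOn (fun r : ℝ => r ^ (a - 1) * Real.exp (-c * r)) (Ioi 0) := by
  simpa using integrableOn_rpow_mul_exp_neg_mul_rpow (p := 1) (by linarith) one_pos hc

lemma norm_cpow_mul_cexp_neg_mul (s b : ℂ) {r : ℝ} (hr : 0 < r) :
    ‖(r : ℂ) ^ (s - 1) * cexp (-(b * r))‖ = r ^ (s.re - 1) * Real.exp (-b.re * r) := by
  rw [norm_mul, norm_cpow_eq_rpow_re_of_pos hr, norm_exp]
  simp

lemma integrableOn_cpow_mul_cexp_neg_mul {s b : ℂ} (hs : 0 < s.re) (hb : 0 < b.re) :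
    IntegrableOn (fun r : ℝ => (r : ℂ) ^ (s - 1) * cexp (-(b * r))) (Ioi 0) := by
  refine (Real.integrableOn_rpow_mul_exp_neg_mul hs hb).mono' (by fun_prop) ?_
  exact (ae_restrict_iff' measurableSet_Ioi).mpr
      (Eventually.of_forall fun r hr => (norm_cpow_mul_cexp_neg_mul s b hr).le)

lemma hasDerivAt_cpow_mul_cexp_neg_mul (s b : ℂ) {r : ℝ} (hr : 0 < r) :
    HasDerivAt (fun b : ℂ => (r : ℂ) ^ (s - 1) * cexp (-(b * r)))
      (-((r : ℂ) ^ (s + 1 - 1) * cexp (-(b * r)))) b := by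
  have hr' : (r : ℂ) ≠ 0 := ofReal_ne_zero.mpr hr.ne'
  have := (((hasDerivAt_id b).mul_const (r : ℂ)).neg.cexp).const_mul ((r : ℂ) ^ (s - 1))
  refine this.congr_deriv ?_
  rw [show s + 1 - 1 = s - 1 + 1 by ring, cpow_add _ _ hr', cpow_one]
  simp only [id, Pi.neg_apply]
  ring

lemma differentiableOn_integral_cpow_mul_cexp_neg_mul {s : ℂ} (hs : 0 < s.re) :
    DifferentiableOn ℂ (fun b : ℂ => ∫ r : ℝ in Ioi 0, (r : ℂ) ^ (s - 1) * cexp (-(b * r)))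
      {b | 0 < b.re} := by
  intro b₀ (hb₀ : 0 < b₀.re)
  have hnhds : {b : ℂ | b₀.re / 2 < b.re} ∈ 𝓝 b₀ :=
    (isOpen_lt continuous_const continuous_re).mem_nhds (half_lt_self hb₀)
  refine (hasDerivAt_integral_of_dominated_loc_of_deriv_le (μ := volume.restrict (Ioi 0))
    (F := fun b (r : ℝ) => (r : ℂ) ^ (s - 1) * cexp (-(b * r)))
    (F' := fun b (r : ℝ) => -((r : ℂ) ^ (s + 1 - 1) * cexp (-(b * r)))) hnhds
    (Eventually.of_forall fun b => by fun_prop) (integrableOn_cpow_mul_cexp_neg_mul hs hb₀)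
    (by fun_prop) ?_ (Real.integrableOn_rpow_mul_exp_neg_mul (a := s.re + 1) (by linarith)
      (half_pos hb₀)) ?_).2.differentiableAt.differentiableWithinAt
  · refine (ae_restrict_iff' measurableSet_Ioi).mpr (Eventually.of_forall
      fun r (hr : 0 < r) b (hb : b₀.re / 2 < b.re) => ?_)
    rw [norm_neg, norm_cpow_mul_cexp_neg_mul _ _ hr]
    simp only [add_re, one_re]
    gcongr
  · exact (ae_restrict_iff' measurableSet_Ioi).mpr
      (Eventually.of_forall fun r hr b _ => hasDerivAt_cpow_mul_cexp_neg_mul s b hr)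

lemma differentiableOn_one_div_cpow (s : ℂ) :
    DifferentiableOn ℂ (fun b : ℂ => (1 / b) ^ s) {b | 0 < b.re} := by
  intro b (hb : 0 < b.re)
  have hb₀ : b ≠ 0 := ne_zero_of_re_pos hb
  have hb' : 0 < (1 / b).re := by
    rw [one_div, inv_re]
    exact div_pos hb (normSq_pos.mpr hb₀)
  exact ((differentiableAt_const _).div differentiableAt_id hb₀).cpow_const
    (Or.inl hb') |>.differentiableWithinAt

lemma integral_cpow_mul_cexp_neg_mul_Ioi {s b : ℂ} (hs : 0 < s.re) (hb : 0 < b.re) :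
    ∫ r : ℝ in Ioi 0, (r : ℂ) ^ (s - 1) * cexp (-(b * r)) = (1 / b) ^ s * Gamma s := by
  have hopen : IsOpen {b : ℂ | 0 < b.re} := isOpen_lt continuous_const continuous_re
  have hreal : ∀ᶠ x : ℝ in 𝓝[≠] 1, ∫ r : ℝ in Ioi 0, (r : ℂ) ^ (s - 1) * cexp (-(x * r))
      = (1 / (x : ℂ)) ^ s * Gamma s :=
    eventually_nhdsWithin_of_eventually_nhds ((lt_mem_nhds one_pos).mono
      fun x hx => integral_cpow_mul_exp_neg_mul_Ioi hs hx)
  have hofReal : Tendsto ((↑) : ℝ → ℂ) (𝓝[≠] 1) (𝓝[≠] ((1 : ℝ) : ℂ)) :=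
    continuous_ofReal.continuousWithinAt.tendsto_nhdsWithin
      fun x hx => (ofReal_injective.ne hx : (x : ℂ) ≠ _)
  have hF := (differentiableOn_integral_cpow_mul_cexp_neg_mul hs).analyticOnNhd hopen
  have hG := ((differentiableOn_one_div_cpow s).mul_const (Gamma s)).analyticOnNhd hopen
  exact hF.eqOn_of_preconnected_of_frequently_eq hG (convex_halfSpace_re_gt 0).isPreconnected
    (by simp) (hofReal.frequently hreal.frequently) hb

lemma exp_cpow_of_im_mem_Ioc {z : ℂ} (hz : z.im ∈ Ioc (-π) π) (s : ℂ) :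
    cexp z ^ s = cexp (z * s) := by
  rw [cpow_def_of_ne_zero (exp_ne_zero z), log_exp hz.1 hz.2]

/-- Ray integral of `e^t t^(s-1)` at angle `θ ∈ (-3π/2, -π/2)`: it converges and equals
`e^(-iπs) Γ(s)`. -/
theorem ray_integral_lower (s : ℂ) (hs : 0 < s.re) (θ : ℝ)
    (hθ : θ ∈ Set.Ioo (-(3 * Real.pi / 2)) (-(Real.pi / 2))) :
    MeasureTheory.IntegrableOn
      (fun r : ℝ => Complex.exp (r * Complex.exp (θ * Complex.I)) * (r : ℂ) ^ (s - 1) *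
        Complex.exp (Complex.I * s * θ)) (Set.Ioi 0) ∧
    (∫ r : ℝ in Set.Ioi 0,
        Complex.exp (r * Complex.exp (θ * Complex.I)) * (r : ℂ) ^ (s - 1) *
          Complex.exp (Complex.I * s * θ))
      = Complex.exp (-(Complex.I * Real.pi * s)) * Complex.Gamma s := by
  obtain ⟨hθ₁, hθ₂⟩ := hθ
  set b : ℂ := cexp ((θ + π : ℝ) * I) with hb_def
  have hb_eq : b = -cexp (θ * I) := by
    rw [hb_def, ofReal_add, add_mul, exp_add, exp_pi_mul_I]
    ring
  have hb : 0 < b.re := by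
    rw [hb_def, exp_ofReal_mul_I_re]
    exact Real.cos_pos_of_mem_Ioo ⟨by linarith, by linarith⟩
  have hintegrand (r : ℝ) : cexp (r * cexp (θ * I)) * (r : ℂ) ^ (s - 1) * cexp (I * s * θ)
      = (r : ℂ) ^ (s - 1) * cexp (-(b * r)) * cexp (I * s * θ) := by
    rw [hb_eq]
    ring_nf
  simp only [hintegrand]
  refine ⟨(integrableOn_cpow_mul_cexp_neg_mul hs hb).mul_const _, ?_⟩
  have him : (-((θ + π : ℝ) * I)).im ∈ Ioc (-π) π := by
    rw [neg_im, mul_I_im, ofReal_re]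
    constructor <;> linarith
  rw [integral_mul_const, integral_cpow_mul_cexp_neg_mul_Ioi hs hb, hb_def, one_div, ← exp_neg,
    exp_cpow_of_im_mem_Ioc him, mul_right_comm, ← exp_add]
  congr 2
  push_cast
  ring
end

section
/- Let s ∈ ℂ with Re(s) > 0, and let θ₁ ∈ (−3π/2, −π/2), θ₂ ∈ (π/2, 3π/2). Then (∫₀^∞ exp(r e^{iθ₂}) r^{s−1} e^{isθ₂} dr) − (∫₀^∞ exp(r e^{iθ₁}) r^{s−1} e^{isθ₁} dr) = 2i sin(πs) Γ(s) = 2πi / Γ(1 − s). -/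
/-! The Laplace transform `∫₀^∞ e^{-a t} t^{s-1} dt = Γ(s) a^{-s}`, classical for real `a > 0`,
extends to `Re a > 0` by the identity theorem, both sides being holomorphic in `a` on the right
half-plane. On a ray of angle `θ = ψ + φ` with `|ψ| < π/2` and `e^{iφ} = -1` the integrand is
`e^{-a r} r^{s-1} e^{isθ}` with `a = e^{iψ}`, so the ray integral is
`Γ(s) e^{-isψ} e^{isθ} = Γ(s) e^{isφ}`. Taking `φ = π` and `φ = -π` gives the difference
`Γ(s) (e^{iπs} - e^{-iπs}) = 2i sin(πs) Γ(s)`, and Euler's reflection formula turns it into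
`2πi / Γ(1 - s)`. -/

open Set MeasureTheory Filter Topology Complex Metric

lemma integrableOn_rpow_mul_exp_neg_mul {q b : ℝ} (hq : -1 < q) (hb : 0 < b) :
    IntegrableOn (fun x : ℝ => x ^ q * Real.exp (-b * x)) (Ioi 0) := by
  simpa using integrableOn_rpow_mul_exp_neg_mul_rpow hq one_pos hb

namespace Complex

lemma norm_exp_neg_mul_mul_cpow (a s : ℂ) {t : ℝ} (ht : 0 < t) :
    ‖exp (-(a * t)) * (t : ℂ) ^ (s - 1)‖ = Real.exp (-a.re * t) * t ^ (s.re - 1) := by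
  rw [norm_mul, norm_exp, norm_cpow_eq_rpow_re_of_pos ht]
  simp

lemma aestronglyMeasurable_exp_neg_mul_mul_cpow (a s : ℂ) :
    AEStronglyMeasurable (fun t : ℝ => exp (-(a * t)) * (t : ℂ) ^ (s - 1))
      (volume.restrict (Ioi 0)) := by
  refine ContinuousOn.aestronglyMeasurable (ContinuousOn.mul (by fun_prop) ?_) measurableSet_Ioi
  exact fun t ht => ((continuousAt_cpow_const (ofReal_mem_slitPlane.2 ht)).comp
    continuous_ofReal.continuousAt).continuousWithinAt

variable {a s : ℂ}

lemma integrableOn_exp_neg_mul_mul_cpow (hs : 0 < s.re) (ha : 0 < a.re) :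
    IntegrableOn (fun t : ℝ => exp (-(a * t)) * (t : ℂ) ^ (s - 1)) (Ioi 0) := by
  refine Integrable.mono' (integrableOn_rpow_mul_exp_neg_mul (q := s.re - 1) (by linarith) ha)
    (aestronglyMeasurable_exp_neg_mul_mul_cpow a s) ?_
  filter_upwards [ae_restrict_mem measurableSet_Ioi] with t ht
  rw [norm_exp_neg_mul_mul_cpow a s ht]
  exact (mul_comm (Real.exp _) _).le

lemma differentiableOn_integral_exp_neg_mul_mul_cpow (hs : 0 < s.re) :
    DifferentiableOn ℂ (fun a : ℂ => ∫ t : ℝ in Ioi 0, exp (-(a * t)) * (t : ℂ) ^ (s - 1))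
      {a | 0 < a.re} := by
  intro a₀ ha₀
  have hε : 0 < a₀.re / 2 := half_pos ha₀
  have hre : ∀ a ∈ ball a₀ (a₀.re / 2), a₀.re / 2 < a.re := fun a ha => by
    have := (abs_re_le_norm (a - a₀)).trans_lt (mem_ball_iff_norm.1 ha)
    rw [sub_re, abs_lt] at this
    linarith
  have hderiv : ∀ t : ℝ, ∀ a : ℂ, HasDerivAt (fun a : ℂ => exp (-(a * t)) * (t : ℂ) ^ (s - 1))
      (-t * (exp (-(a * t)) * (t : ℂ) ^ (s - 1))) a := fun t a =>
    (((hasDerivAt_mul_const (t : ℂ)).fun_neg.cexp).mul_const _).congr_deriv (by ring)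
  have hbound : ∀ᵐ (t : ℝ) ∂volume.restrict (Ioi 0), ∀ a ∈ ball a₀ (a₀.re / 2),
      ‖-(t : ℂ) * (exp (-(a * t)) * (t : ℂ) ^ (s - 1))‖
        ≤ t ^ s.re * Real.exp (-(a₀.re / 2) * t) := by
    filter_upwards [ae_restrict_mem measurableSet_Ioi] with t (ht : 0 < t) a ha
    rw [norm_mul, norm_neg, norm_real, Real.norm_of_nonneg ht.le, norm_exp_neg_mul_mul_cpow a s ht,
      Real.rpow_sub_one ht.ne']
    calc t * (Real.exp (-a.re * t) * (t ^ s.re / t)) = t ^ s.re * Real.exp (-a.re * t) := by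
          field_simp
      _ ≤ t ^ s.re * Real.exp (-(a₀.re / 2) * t) := by
          gcongr
          nlinarith [hre a ha]
  exact (hasDerivAt_integral_of_dominated_loc_of_deriv_le (ball_mem_nhds a₀ hε)
    (Eventually.of_forall fun a => aestronglyMeasurable_exp_neg_mul_mul_cpow a s)
    (integrableOn_exp_neg_mul_mul_cpow hs ha₀)
    (continuous_ofReal.neg.aestronglyMeasurable.mul
      (aestronglyMeasurable_exp_neg_mul_mul_cpow a₀ s))
    hbound (integrableOn_rpow_mul_exp_neg_mul (by linarith) hε)
    (Eventually.of_forall fun t a _ => hderiv t a)).2.differentiableAt.differentiableWithinAt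

lemma tendsto_ofReal_nhdsNE (x : ℝ) : Tendsto ((↑) : ℝ → ℂ) (𝓝[≠] x) (𝓝[≠] (x : ℂ)) :=
  continuous_ofReal.continuousWithinAt.tendsto_nhdsWithin fun _ hy => by simpa using hy

lemma integral_exp_neg_mul_mul_cpow_Ioi (hs : 0 < s.re) (ha : 0 < a.re) :
    ∫ t : ℝ in Ioi 0, exp (-(a * t)) * (t : ℂ) ^ (s - 1) = Gamma s * a ^ (-s) := by
  set U : Set ℂ := {a | 0 < a.re}
  have hU : IsOpen U := isOpen_lt continuous_const continuous_re
  have hlhs := (differentiableOn_integral_exp_neg_mul_mul_cpow hs).analyticOnNhd hU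
  have hrhs : AnalyticOnNhd ℂ (fun a : ℂ => Gamma s * a ^ (-s)) U :=
    DifferentiableOn.analyticOnNhd (fun a ha => ((differentiableAt_id.cpow_const
      (mem_slitPlane_iff.2 (Or.inl ha))).const_mul _).differentiableWithinAt) hU
  have hreal : ∀ r : ℝ, 0 < r →
      ∫ t : ℝ in Ioi 0, exp (-(r * t)) * (t : ℂ) ^ (s - 1) = Gamma s * (r : ℂ) ^ (-s) := by
    intro r hr
    simp_rw [mul_comm (exp _), integral_cpow_mul_exp_neg_mul_Ioi hs hr, one_div,
      inv_cpow_ofReal_nonneg hr.le, cpow_neg, mul_comm]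
  have hfreq : ∃ᶠ z in 𝓝[≠] (1 : ℂ), ∫ t : ℝ in Ioi 0, exp (-(z * t)) * (t : ℂ) ^ (s - 1)
      = Gamma s * z ^ (-s) := by
    refine ofReal_one ▸ (tendsto_ofReal_nhdsNE 1).frequently ?_
    exact ((eventually_nhdsWithin_of_eventually_nhds (lt_mem_nhds one_pos)).mono hreal).frequently
  exact hlhs.eqOn_of_preconnected_of_frequently_eq hrhs
    (convex_halfSpace_re_gt 0).isPreconnected (by simp) hfreq ha

lemma integral_exp_mul_exp_mul_I_mul_cpow_Ioi (hs : 0 < s.re) {θ φ : ℝ}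
    (hφ : exp (φ * I) = -1) (hθ : θ - φ ∈ Ioo (-(Real.pi / 2)) (Real.pi / 2)) :
    ∫ r : ℝ in Ioi 0, exp (r * exp (θ * I)) * (r : ℂ) ^ (s - 1) * exp (I * s * θ)
      = Gamma s * exp (I * s * φ) := by
  set ψ := θ - φ
  have hrot : exp (θ * I) = -exp (ψ * I) := by
    rw [show θ = ψ + φ by ring, ofReal_add, add_mul, exp_add, hφ, mul_neg_one]
  have hre : 0 < (exp (ψ * I)).re := by
    rw [exp_ofReal_mul_I_re]
    exact Real.cos_pos_of_mem_Ioo hθ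
  have hpow : exp (ψ * I) ^ (-s) = exp (-s * (ψ * I)) := by
    rw [cpow_def_of_ne_zero (exp_ne_zero _), log_exp, mul_comm] <;>
      simp only [mul_I_im, ofReal_re] <;> linarith [Real.pi_pos, hθ.1, hθ.2]
  calc ∫ r : ℝ in Ioi 0, exp (r * exp (θ * I)) * (r : ℂ) ^ (s - 1) * exp (I * s * θ)
      = (∫ r : ℝ in Ioi 0, exp (-(exp (ψ * I) * r)) * (r : ℂ) ^ (s - 1)) * exp (I * s * θ) := by
        rw [← integral_mul_const, hrot]
        simp only [mul_neg, mul_comm]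
    _ = Gamma s * exp (-s * (ψ * I)) * exp (I * s * θ) := by
        rw [integral_exp_neg_mul_mul_cpow_Ioi hs hre, hpow]
    _ = Gamma s * exp (I * s * φ) := by
        rw [mul_assoc, ← exp_add]
        congr 2
        push_cast [ψ]
        ring

lemma sin_pi_mul_mul_Gamma_eq_pi_div_Gamma_one_sub (hs : Gamma s ≠ 0) :
    sin (Real.pi * s) * Gamma s = Real.pi / Gamma (1 - s) := by
  have hrefl := Gamma_mul_Gamma_one_sub s
  have hπ : (Real.pi : ℂ) ≠ 0 := ofReal_ne_zero.2 Real.pi_ne_zero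
  rcases eq_or_ne (sin (Real.pi * s)) 0 with hsin | hsin
  -- at the integers `s ≥ 1` both sides vanish: `Γ(1 - s) = 0`, and `π / 0 = 0`
  · rw [hsin, div_zero, mul_eq_zero, or_iff_right hs] at hrefl
    rw [hsin, hrefl, zero_mul, div_zero]
  · have hΓ : Gamma (1 - s) ≠ 0 := fun h => div_ne_zero hπ hsin (by rw [← hrefl, h, mul_zero])
    rw [eq_div_iff hΓ, mul_assoc, hrefl, mul_div_cancel₀ _ hsin]

end Complex

/-- Hankel contour formula: the difference of the two ray integrals equals
`2i sin(πs) Γ(s) = 2πi / Γ(1-s)`. -/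
theorem hankel_formula (s : ℂ) (hs : 0 < s.re)
    (θ₁ : ℝ) (hθ₁ : θ₁ ∈ Set.Ioo (-(3 * Real.pi / 2)) (-(Real.pi / 2)))
    (θ₂ : ℝ) (hθ₂ : θ₂ ∈ Set.Ioo (Real.pi / 2) (3 * Real.pi / 2)) :
    (∫ r : ℝ in Set.Ioi 0,
        Complex.exp (r * Complex.exp (θ₂ * Complex.I)) * (r : ℂ) ^ (s - 1) *
          Complex.exp (Complex.I * s * θ₂)) -
      (∫ r : ℝ in Set.Ioi 0,
        Complex.exp (r * Complex.exp (θ₁ * Complex.I)) * (r : ℂ) ^ (s - 1) *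
          Complex.exp (Complex.I * s * θ₁))
      = 2 * Complex.I * Complex.sin (Real.pi * s) * Complex.Gamma s ∧
    2 * Complex.I * Complex.sin (Real.pi * s) * Complex.Gamma s
      = 2 * Real.pi * Complex.I / Complex.Gamma (1 - s) := by
  obtain ⟨hθ₁l, hθ₁r⟩ := hθ₁
  obtain ⟨hθ₂l, hθ₂r⟩ := hθ₂
  have hexp_neg_pi : exp (((-Real.pi : ℝ) : ℂ) * I) = -1 := by
    rw [ofReal_neg, neg_mul, exp_neg_pi_mul_I]
  have htwo_sin : 2 * I * sin (Real.pi * s)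
      = exp (I * s * Real.pi) - exp (I * s * ((-Real.pi : ℝ) : ℂ)) := by
    rw [mul_right_comm, two_sin]
    push_cast
    ring_nf
    rw [I_sq]
    ring
  constructor
  · rw [integral_exp_mul_exp_mul_I_mul_cpow_Ioi hs exp_pi_mul_I ⟨by linarith, by linarith⟩,
      integral_exp_mul_exp_mul_I_mul_cpow_Ioi hs hexp_neg_pi ⟨by linarith, by linarith⟩,
      htwo_sin]
    ring
  · rw [mul_assoc _ (sin _),
      sin_pi_mul_mul_Gamma_eq_pi_div_Gamma_one_sub (Gamma_ne_zero_of_re_pos hs)]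
    ring
end

section
/- Let s ∈ ℂ with Re(s) > 0 and let θ ∈ (π/2, 3π/2). Consider the closed contour C₁ consisting of: the segment from ε e^{iθ} to R e^{iθ}, the circular arc {R e^{iφ} : θ ≤ φ ≤ π}, the segment from R e^{iπ} to ε e^{iπ}, and the circular arc {ε e^{iφ} : π ≥ φ ≥ θ} (with 0 < ε < R). Then ∮_{C₁} e^t t^{s−1} dt = 0, where t^{s−1} is defined by the branch with arg t ∈ [θ, π] on the contour. -/
/-!
Substituting `t = e^w` with `w = log r + iφ` maps the boundary of the rectangle
`[log ε, log R] × [θ, π]` onto `C₁`, and the branch of `t^{s-1}` with `arg t = φ` becomes the entire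
function `e^{(s-1)w}`. So `∮_{C₁} e^t t^{s-1} dt` is the integral of the entire function
`exp(e^w) e^{(s-1)w} e^w` around the boundary of that rectangle, which vanishes by Cauchy's
theorem for rectangles.
-/

open Set intervalIntegral

/-- Complex power of the number with modulus `m` and prescribed argument `φ`:
`(m e^{iφ})^a = m^a e^{iaφ}` (fixed branch). -/
noncomputable def branchPow (m φ : ℝ) (a : ℂ) : ℂ :=
  (m : ℂ) ^ a * Complex.exp (a * φ * Complex.I)

open Complex

/-- The form `e^t t^{s-1} dt` pulled back along `t = e^w`. -/
noncomputable def logIntegrand (s w : ℂ) : ℂ :=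
  exp (exp w) * exp ((s - 1) * w) * exp w

lemma differentiable_logIntegrand (s : ℂ) : Differentiable ℂ (logIntegrand s) := by
  unfold logIntegrand
  fun_prop

lemma branchPow_eq_exp {m : ℝ} (hm : 0 < m) (φ : ℝ) (a : ℂ) :
    branchPow m φ a = exp (a * (Real.log m + φ * I)) := by
  rw [branchPow, cpow_def_of_ne_zero (ofReal_ne_zero.mpr hm.ne'), ← ofReal_log hm.le,
    ← exp_add]
  ring_nf

lemma exp_log_add_mul_I {m : ℝ} (hm : 0 < m) (φ : ℝ) :
    exp (Real.log m + φ * I) = m * exp (φ * I) := by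
  rw [exp_add, ← ofReal_exp, Real.exp_log hm]

lemma logIntegrand_log_add_mul_I (s : ℂ) {m : ℝ} (hm : 0 < m) (φ : ℝ) :
    logIntegrand s (Real.log m + φ * I) =
      exp (m * exp (φ * I)) * branchPow m φ (s - 1) * (m * exp (φ * I)) := by
  rw [logIntegrand, branchPow_eq_exp hm, exp_log_add_mul_I hm]

lemma integral_exp_smul_comp_exp {E : Type*} [NormedAddCommGroup E] [NormedSpace ℝ E]
    (g : ℝ → E) (a b : ℝ) :
    ∫ x in a..b, Real.exp x • g (Real.exp x) = ∫ u in Real.exp a..Real.exp b, g u :=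
  integral_deriv_smul_comp_of_deriv_nonneg Real.continuous_exp.continuousOn
    (fun x _ => Real.hasDerivAt_exp x) (fun x _ => (Real.exp_pos x).le)

lemma integral_ray_eq_integral_logIntegrand (s : ℂ) {ε R : ℝ} (hε : 0 < ε) (hR : 0 < R)
    (ψ : ℝ) :
    ∫ r : ℝ in ε..R, exp (r * exp (ψ * I)) * branchPow r ψ (s - 1) * exp (ψ * I) =
      ∫ x : ℝ in Real.log ε..Real.log R, logIntegrand s (x + ψ * I) := by
  have hsubst := integral_exp_smul_comp_exp
    (fun r : ℝ => exp (r * exp (ψ * I)) * branchPow r ψ (s - 1) * exp (ψ * I))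
    (Real.log ε) (Real.log R)
  rw [Real.exp_log hε, Real.exp_log hR] at hsubst
  rw [← hsubst]
  refine integral_congr fun x _ => ?_
  have h := logIntegrand_log_add_mul_I s (Real.exp_pos x) ψ
  rw [Real.log_exp] at h
  rw [h, real_smul]
  ring

lemma integral_arc_eq_integral_logIntegrand (s : ℂ) {m : ℝ} (hm : 0 < m) (φ₁ φ₂ : ℝ) :
    ∫ φ : ℝ in φ₁..φ₂,
        exp (m * exp (φ * I)) * branchPow m φ (s - 1) * (I * m * exp (φ * I)) =
      I * ∫ φ : ℝ in φ₁..φ₂, logIntegrand s (Real.log m + φ * I) := by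
  rw [← integral_const_mul]
  refine integral_congr fun φ _ => ?_
  simp only [logIntegrand_log_add_mul_I s hm]
  ring

theorem cauchy_contour_C1_general (s : ℂ) (θ : ℝ)
    (ε R : ℝ) (hε : 0 < ε) (hεR : ε < R) :
    (∫ r : ℝ in ε..R,
        Complex.exp (r * Complex.exp (θ * Complex.I)) * branchPow r θ (s - 1) *
          Complex.exp (θ * Complex.I)) +
    (∫ φ : ℝ in θ..Real.pi,
        Complex.exp (R * Complex.exp (φ * Complex.I)) * branchPow R φ (s - 1) *
          (Complex.I * R * Complex.exp (φ * Complex.I))) +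
    (∫ r : ℝ in R..ε,
        Complex.exp (r * Complex.exp (Real.pi * Complex.I)) * branchPow r Real.pi (s - 1) *
          Complex.exp (Real.pi * Complex.I)) +
    (∫ φ : ℝ in Real.pi..θ,
        Complex.exp (ε * Complex.exp (φ * Complex.I)) * branchPow ε φ (s - 1) *
          (Complex.I * ε * Complex.exp (φ * Complex.I))) = 0 := by
  have hR : 0 < R := hε.trans hεR
  rw [integral_symm ε R, integral_symm θ Real.pi,
    integral_ray_eq_integral_logIntegrand s hε hR, integral_ray_eq_integral_logIntegrand s hε hR,
    integral_arc_eq_integral_logIntegrand s hR, integral_arc_eq_integral_logIntegrand s hε]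
  have hrect := integral_boundary_rect_eq_zero_of_differentiableOn (logIntegrand s)
    ⟨Real.log ε, θ⟩ ⟨Real.log R, Real.pi⟩ (differentiable_logIntegrand s).differentiableOn
  simp only [smul_eq_mul] at hrect
  linear_combination hrect

/-- Cauchy's theorem for the auxiliary closed contour `C₁`: segment at angle `θ` from
`ε` to `R`, large arc from `θ` to `π`, segment at angle `π` from `R` back to `ε`, and
small arc from `π` back to `θ`; the branch of `t^(s-1)` uses `arg t ∈ [θ, π]`. -/
theorem cauchy_contour_C1 (s : ℂ) (hs : 0 < s.re) (θ : ℝ)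
    (hθ : θ ∈ Set.Ioo (Real.pi / 2) (3 * Real.pi / 2))
    (ε R : ℝ) (hε : 0 < ε) (hεR : ε < R) :
    (∫ r : ℝ in ε..R,
        Complex.exp (r * Complex.exp (θ * Complex.I)) * branchPow r θ (s - 1) *
          Complex.exp (θ * Complex.I)) +
    (∫ φ : ℝ in θ..Real.pi,
        Complex.exp (R * Complex.exp (φ * Complex.I)) * branchPow R φ (s - 1) *
          (Complex.I * R * Complex.exp (φ * Complex.I))) +
    (∫ r : ℝ in R..ε,
        Complex.exp (r * Complex.exp (Real.pi * Complex.I)) * branchPow r Real.pi (s - 1) *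
          Complex.exp (Real.pi * Complex.I)) +
    (∫ φ : ℝ in Real.pi..θ,
        Complex.exp (ε * Complex.exp (φ * Complex.I)) * branchPow ε φ (s - 1) *
          (Complex.I * ε * Complex.exp (φ * Complex.I))) = 0 :=
  cauchy_contour_C1_general s θ ε R hε hεR
end
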